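/- For density matrices ρ, σ and a matrix A with 0 ≤ A ≤ Id, the root fidelity satisfies √F(ρ,σ) ≤ √tr(σA†A)·√F(ρ, σ|A) + √tr(σ(Id−A))·√tr(ρ(Id−A)), where σ|A = AσA†/tr(σA†A). -/

import Mathlib

open Matrix ComplexOrder

/-- The positive semidefinite square root of a positive semidefinite matrix
(the definition Mathlib had as `Matrix.PosSemidef.sqrt`, since removed). -/
noncomputable def Matrix.PosSemidef.sqrt {n 𝕜 : Type*} [Fintype n] [DecidableEq n] [RCLike 𝕜]
    {A : Matrix n n 𝕜} (hA : A.PosSemidef) : Matrix n n 𝕜 :=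
  hA.1.eigenvectorUnitary.1 * diagonal ((↑) ∘ Real.sqrt ∘ hA.1.eigenvalues) *
  (star hA.1.eigenvectorUnitary : Matrix n n 𝕜)

/-- The Schatten 1-norm (trace norm): ‖M‖₁ = tr √(MᴴM). -/
noncomputable def traceNorm {n m : Type*} [Fintype n] [Fintype m] [DecidableEq m]
    (M : Matrix n m ℂ) : ℝ :=
  ((Matrix.posSemidef_conjTranspose_mul_self M).sqrt.trace).re

/-!
Split `√ρ √σ = √ρ A √σ + √ρ (1 - A) √σ` and use the triangle inequality for the trace norm.
The first summand has the same trace norm as `√tr(σ A†A) • √ρ √(σ|A)`, since both have Gram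
matrix `M M† = √ρ A σ A† √ρ`. The second factors as `(√(1 - A) √ρ)† (√(1 - A) √σ)`, and the
Hölder inequality `‖X† Y‖₁ ≤ ‖X‖₂ ‖Y‖₂` bounds it by `√tr(σ(1 - A)) √tr(ρ(1 - A))`.
The trace-norm facts all come from the duality `‖M‖₁ = max_{‖K‖ ≤ 1} Re tr(K M)` with the
operator norm, which rests on a polar decomposition `M = W |M|` with `‖W‖ ≤ 1`.
-/

open scoped MatrixOrder Matrix.Norms.L2Operator

lemma norm_le_one_iff_star_mul_self_le_one {A : Type*} [CStarAlgebra A] [PartialOrder A]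
    [StarOrderedRing A] (a : A) : ‖a‖ ≤ 1 ↔ star a * a ≤ 1 := by
  rw [← CStarAlgebra.norm_le_one_iff_of_nonneg _ (star_mul_self_nonneg a),
    CStarRing.norm_star_mul_self]
  exact ⟨fun h => mul_le_one₀ h (norm_nonneg a) h, fun h => by nlinarith [norm_nonneg a]⟩

namespace Matrix

variable {n : Type*} [Fintype n]

lemma norm_trace_conjTranspose_mul_le {m : Type*} [Fintype m] (X Y : Matrix m n ℂ) :
    ‖(Xᴴ * Y).trace‖ ≤ √((Xᴴ * X).trace.re) * √((Yᴴ * Y).trace.re) := by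
  have h := norm_inner_le_norm (𝕜 := ℂ) (WithLp.toLp 2 (vec X)) (WithLp.toLp 2 (vec Y))
  rw [norm_eq_sqrt_re_inner (𝕜 := ℂ) (WithLp.toLp 2 (vec X)),
    norm_eq_sqrt_re_inner (𝕜 := ℂ) (WithLp.toLp 2 (vec Y))] at h
  simpa only [EuclideanSpace.inner_toLp_toLp, dotProduct_comm _ (star _),
    star_vec_dotProduct_vec, RCLike.re_to_complex] using h

lemma PosSemidef.trace_smul_inv_trace_smul {A : Matrix n n ℂ} (hA : A.PosSemidef) :
    A.trace • A.trace⁻¹ • A = A := by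
  rcases eq_or_ne A.trace 0 with h | h
  · simp [hA.trace_eq_zero_iff.mp h]
  · rw [smul_smul, mul_inv_cancel₀ h, one_smul]

variable [DecidableEq n]

lemma continuousOn_spectrum (f : ℝ → ℝ) (a : Matrix n n ℂ) :
    ContinuousOn f (spectrum ℝ a) :=
  (spectrum ℝ a).toFinite.continuousOn f

lemma cfc_mul_mul_cfc (f : ℝ → ℝ) {a : Matrix n n ℂ} (ha : IsSelfAdjoint a) :
    cfc f a * a * cfc f a = cfc (fun x => f x * x * f x) a := by
  rw [cfc_mul _ _ a (continuousOn_spectrum _ a) (continuousOn_spectrum _ a),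
    cfc_mul _ _ a (continuousOn_spectrum _ a) (continuousOn_spectrum _ a), cfc_id' ℝ a ha]

lemma mul_cfc_star_mul_self_eq_self (M : Matrix n n ℂ) {f : ℝ → ℝ}
    (hf : ∀ x ∈ spectrum ℝ (star M * M), x ≠ 0 → f x = 1) : M * cfc f (star M * M) = M := by
  set a := star M * M
  have ha : IsSelfAdjoint a := .star_mul_self M
  set E := cfc (fun x => 1 - f x) a
  have hE : E = 1 - cfc f a := by
    rw [← cfc_const_one ℝ a ha,
      ← cfc_sub _ _ a (continuousOn_spectrum _ a) (continuousOn_spectrum _ a)]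
  have hEaE : E * a * E = 0 := by
    rw [cfc_mul_mul_cfc _ ha]
    refine (cfc_congr fun x hx => ?_).trans (cfc_zero ℝ a)
    rcases eq_or_ne x 0 with rfl | hx0
    · simp
    · simp [hf x hx hx0]
  have hME : M * E = 0 := by
    have hEsa : star E = E := (cfc_predicate _ a : IsSelfAdjoint E).star_eq
    rw [← CStarRing.star_mul_self_eq_zero_iff, star_mul, hEsa,
      show E * star M * (M * E) = E * a * E by simp only [a, mul_assoc], hEaE]
  rwa [hE, mul_sub, mul_one, sub_eq_zero, eq_comm] at hME

theorem exists_polar_decomposition (M : Matrix n n ℂ) :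
    ∃ W : Matrix n n ℂ, ‖W‖ ≤ 1 ∧ W * CFC.abs M = M ∧ star W * M = CFC.abs M := by
  set a := star M * M
  have habs : CFC.abs M = cfc Real.sqrt a := by
    rw [CFC.abs, CFC.sqrt_eq_real_sqrt _ (star_mul_self_nonneg M), cfcₙ_eq_cfc]
  -- Since `(√0)⁻¹ = 0`, `G` inverts `|M| = √a` on its support and vanishes on its kernel.
  set G := cfc (fun x : ℝ => (√x)⁻¹) a
  have hG : star G = G := (cfc_predicate _ a : IsSelfAdjoint G).star_eq
  have hGa : G * a = CFC.abs M := by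
    conv_lhs => rw [← cfc_id' ℝ a]
    rw [← cfc_mul _ _ a (continuousOn_spectrum _ a) (continuousOn_spectrum _ a), habs]
    exact cfc_congr fun x _ => by rw [inv_mul_eq_div, Real.div_sqrt]
  refine ⟨M * G, ?_, ?_, ?_⟩
  · rw [norm_le_one_iff_star_mul_self_le_one, star_mul, hG,
      show G * star M * (M * G) = G * a * G by simp only [a, mul_assoc],
      cfc_mul_mul_cfc _ (.star_mul_self M)]
    refine cfc_le_one _ a fun x _ => ?_
    rw [inv_mul_eq_div, Real.div_sqrt]
    exact mul_inv_le_one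
  · rw [mul_assoc, habs, ← cfc_mul _ _ a (continuousOn_spectrum _ a) (continuousOn_spectrum _ a),
      mul_cfc_star_mul_self_eq_self M]
    intro x hx hx0
    have hx : 0 < x := (spectrum_nonneg_of_nonneg (star_mul_self_nonneg M) hx).lt_of_ne' hx0
    exact inv_mul_cancel₀ (Real.sqrt_pos.mpr hx).ne'
  · rw [star_mul, hG, mul_assoc, hGa]

lemma re_trace_conjTranspose_mul_self_mul_le {K : Matrix n n ℂ} (hK : ‖K‖ ≤ 1)
    (Z : Matrix n n ℂ) : ((K * Z)ᴴ * (K * Z)).trace.re ≤ (Zᴴ * Z).trace.re := by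
  have hle : star Z * (star K * K) * Z ≤ star Z * 1 * Z :=
    star_left_conjugate_le_conjugate ((norm_le_one_iff_star_mul_self_le_one K).mp hK) Z
  have h := (le_iff.mp hle).trace_nonneg
  rw [trace_sub, sub_nonneg] at h
  simpa only [conjTranspose_mul, mul_assoc, mul_one, star_eq_conjTranspose] using
    (Complex.le_def.mp h).1

lemma norm_trace_mul_le_re_trace {K P : Matrix n n ℂ} (hK : ‖K‖ ≤ 1) (hP : 0 ≤ P) :
    ‖(K * P).trace‖ ≤ P.trace.re := by
  set S := CFC.sqrt P
  have hS : Sᴴ = S := (CFC.sqrt_nonneg P).posSemidef.1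
  have hSS : Sᴴ * S = P := by rw [hS, CFC.sqrt_mul_sqrt_self P hP]
  have htr : (K * P).trace = (Sᴴ * (K * S)).trace := by
    rw [← hSS, hS, ← mul_assoc, trace_mul_comm, ← mul_assoc]
  calc ‖(K * P).trace‖
      ≤ √((Sᴴ * S).trace.re) * √(((K * S)ᴴ * (K * S)).trace.re) := by
        rw [htr]; exact norm_trace_conjTranspose_mul_le _ _
    _ ≤ √((Sᴴ * S).trace.re) * √((Sᴴ * S).trace.re) := by
        gcongr ?_ * √?_
        exact re_trace_conjTranspose_mul_self_mul_le hK S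
    _ = P.trace.re := by
        rw [hSS, Real.mul_self_sqrt (Complex.nonneg_iff.mp hP.posSemidef.trace_nonneg).1]

lemma PosSemidef.sqrt_eq_cfcSqrt {A : Matrix n n ℂ} (hA : A.PosSemidef) :
    hA.sqrt = CFC.sqrt A := by
  rw [CFC.sqrt_eq_cfc, cfc_nnreal_eq_real _ A, hA.1.cfc_eq, IsHermitian.cfc,
    Unitary.conjStarAlgAut_apply, PosSemidef.sqrt]
  congr 3
  funext i
  simp [hA.eigenvalues_nonneg i]

lemma PosSemidef.sqrt_mul_self {A : Matrix n n ℂ} (hA : A.PosSemidef) :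
    hA.sqrt * hA.sqrt = A := by
  rw [sqrt_eq_cfcSqrt]
  exact CFC.sqrt_mul_sqrt_self A hA.nonneg

lemma PosSemidef.conjTranspose_sqrt {A : Matrix n n ℂ} (hA : A.PosSemidef) :
    hA.sqrtᴴ = hA.sqrt := by
  rw [sqrt_eq_cfcSqrt]
  exact (CFC.sqrt_nonneg A).posSemidef.1

lemma PosSemidef.mul_sqrt_mul_conjTranspose {A : Matrix n n ℂ} (hA : A.PosSemidef)
    (R : Matrix n n ℂ) : R * hA.sqrt * (R * hA.sqrt)ᴴ = R * A * Rᴴ := by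
  rw [conjTranspose_mul, hA.conjTranspose_sqrt, mul_assoc, ← mul_assoc hA.sqrt,
    hA.sqrt_mul_self, ← mul_assoc]

lemma PosSemidef.trace_conjTranspose_mul_self_sqrt_mul_sqrt {A B : Matrix n n ℂ}
    (hA : A.PosSemidef) (hB : B.PosSemidef) :
    ((hB.sqrt * hA.sqrt)ᴴ * (hB.sqrt * hA.sqrt)).trace = (A * B).trace := by
  rw [conjTranspose_mul, hA.conjTranspose_sqrt, hB.conjTranspose_sqrt, mul_assoc,
    ← mul_assoc hB.sqrt, hB.sqrt_mul_self, trace_mul_comm, mul_assoc, hA.sqrt_mul_self,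
    trace_mul_comm]

lemma traceNorm_eq_re_trace_cfcAbs (M : Matrix n n ℂ) : traceNorm M = (CFC.abs M).trace.re := by
  rw [traceNorm, PosSemidef.sqrt_eq_cfcSqrt, CFC.abs, star_eq_conjTranspose]

lemma re_trace_mul_le_traceNorm {K : Matrix n n ℂ} (hK : ‖K‖ ≤ 1) (M : Matrix n n ℂ) :
    (K * M).trace.re ≤ traceNorm M := by
  obtain ⟨W, hW, hWM, -⟩ := exists_polar_decomposition M
  have hKW : ‖K * W‖ ≤ 1 := (norm_mul_le K W).trans (mul_le_one₀ hK (norm_nonneg W) hW)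
  calc (K * M).trace.re ≤ ‖(K * W * CFC.abs M).trace‖ := by
        rw [mul_assoc, hWM]; exact Complex.re_le_norm _
    _ ≤ traceNorm M := by
        rw [traceNorm_eq_re_trace_cfcAbs]
        exact norm_trace_mul_le_re_trace hKW (CFC.abs_nonneg M)

lemma exists_re_trace_mul_eq_traceNorm (M : Matrix n n ℂ) :
    ∃ K : Matrix n n ℂ, ‖K‖ ≤ 1 ∧ (K * M).trace.re = traceNorm M := by
  obtain ⟨W, hW, -, hWM⟩ := exists_polar_decomposition M
  exact ⟨star W, by rwa [norm_star], by rw [hWM, traceNorm_eq_re_trace_cfcAbs]⟩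

lemma traceNorm_add_le (X Y : Matrix n n ℂ) : traceNorm (X + Y) ≤ traceNorm X + traceNorm Y := by
  obtain ⟨K, hK, hKeq⟩ := exists_re_trace_mul_eq_traceNorm (X + Y)
  rw [← hKeq, mul_add, trace_add, Complex.add_re]
  exact add_le_add (re_trace_mul_le_traceNorm hK X) (re_trace_mul_le_traceNorm hK Y)

lemma traceNorm_conjTranspose_le (M : Matrix n n ℂ) : traceNorm Mᴴ ≤ traceNorm M := by
  obtain ⟨K, hK, hKeq⟩ := exists_re_trace_mul_eq_traceNorm Mᴴ
  have hKH : ‖Kᴴ‖ ≤ 1 := by rwa [← star_eq_conjTranspose, norm_star]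
  have htr : (Kᴴ * M).trace = star (K * Mᴴ).trace := by
    rw [← trace_conjTranspose, conjTranspose_mul, conjTranspose_conjTranspose, trace_mul_comm]
  calc traceNorm Mᴴ = (Kᴴ * M).trace.re := by rw [← hKeq, htr]; exact (Complex.conj_re _).symm
    _ ≤ traceNorm M := re_trace_mul_le_traceNorm hKH M

lemma traceNorm_conjTranspose (M : Matrix n n ℂ) : traceNorm Mᴴ = traceNorm M :=
  (traceNorm_conjTranspose_le M).antisymm <| by
    simpa using traceNorm_conjTranspose_le Mᴴ

lemma traceNorm_smul (c : ℂ) (M : Matrix n n ℂ) : traceNorm (c • M) = ‖c‖ * traceNorm M := by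
  simp [traceNorm_eq_re_trace_cfcAbs, CFC.abs_smul, trace_smul]

lemma traceNorm_eq_of_mul_conjTranspose_eq {X Y : Matrix n n ℂ} (h : X * Xᴴ = Y * Yᴴ) :
    traceNorm X = traceNorm Y := by
  rw [← traceNorm_conjTranspose X, ← traceNorm_conjTranspose Y, traceNorm_eq_re_trace_cfcAbs,
    traceNorm_eq_re_trace_cfcAbs, CFC.abs, CFC.abs, star_eq_conjTranspose, star_eq_conjTranspose,
    conjTranspose_conjTranspose, conjTranspose_conjTranspose, h]

lemma traceNorm_eq_sqrt_mul_of_mul_conjTranspose_eq_smul {X Y : Matrix n n ℂ} {c : ℝ}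
    (hc : 0 ≤ c) (h : X * Xᴴ = (c : ℂ) • (Y * Yᴴ)) : traceNorm X = √c * traceNorm Y := by
  have hXY : X * Xᴴ = ((√c : ℝ) : ℂ) • Y * (((√c : ℝ) : ℂ) • Y)ᴴ := by
    rw [h, conjTranspose_smul, smul_mul_smul_comm, Complex.star_def, Complex.conj_ofReal,
      ← Complex.ofReal_mul, Real.mul_self_sqrt hc]
  rw [traceNorm_eq_of_mul_conjTranspose_eq hXY, traceNorm_smul, Complex.norm_real,
    Real.norm_of_nonneg (Real.sqrt_nonneg c)]

lemma traceNorm_conjTranspose_mul_le (X Y : Matrix n n ℂ) :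
    traceNorm (Xᴴ * Y) ≤ √((Xᴴ * X).trace.re) * √((Yᴴ * Y).trace.re) := by
  obtain ⟨K, hK, hKeq⟩ := exists_re_trace_mul_eq_traceNorm (Xᴴ * Y)
  have hshrink : ((X * Kᴴ)ᴴ * (X * Kᴴ)).trace.re ≤ (Xᴴ * X).trace.re := by
    have hXK : (X * Kᴴ)ᴴ = K * Xᴴ := by rw [conjTranspose_mul, conjTranspose_conjTranspose]
    have hKX : (K * Xᴴ)ᴴ = X * Kᴴ := by rw [conjTranspose_mul, conjTranspose_conjTranspose]
    calc ((X * Kᴴ)ᴴ * (X * Kᴴ)).trace.re = ((K * Xᴴ)ᴴ * (K * Xᴴ)).trace.re := by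
          rw [hXK, hKX, trace_mul_comm]
      _ ≤ (Xᴴᴴ * Xᴴ).trace.re := re_trace_conjTranspose_mul_self_mul_le hK Xᴴ
      _ = (Xᴴ * X).trace.re := by rw [conjTranspose_conjTranspose, trace_mul_comm]
  calc traceNorm (Xᴴ * Y) = ((X * Kᴴ)ᴴ * Y).trace.re := by
        rw [← hKeq, conjTranspose_mul, conjTranspose_conjTranspose, mul_assoc]
    _ ≤ ‖((X * Kᴴ)ᴴ * Y).trace‖ := Complex.re_le_norm _
    _ ≤ √(((X * Kᴴ)ᴴ * (X * Kᴴ)).trace.re) * √((Yᴴ * Y).trace.re) :=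
        norm_trace_conjTranspose_mul_le _ _
    _ ≤ √((Xᴴ * X).trace.re) * √((Yᴴ * Y).trace.re) := by gcongr

lemma traceNorm_sqrt_mul_mul_sqrt_le {ρ σ B : Matrix n n ℂ} (hρ : ρ.PosSemidef)
    (hσ : σ.PosSemidef) (hB : B.PosSemidef) :
    traceNorm (hρ.sqrt * B * hσ.sqrt) ≤ √((σ * B).trace.re) * √((ρ * B).trace.re) := by
  have hsplit : hρ.sqrt * B * hσ.sqrt = (hB.sqrt * hρ.sqrt)ᴴ * (hB.sqrt * hσ.sqrt) := by
    simp only [conjTranspose_mul, hρ.conjTranspose_sqrt, hB.conjTranspose_sqrt, mul_assoc]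
    rw [← mul_assoc hB.sqrt, hB.sqrt_mul_self]
  rw [hsplit, mul_comm]
  simpa only [hρ.trace_conjTranspose_mul_self_sqrt_mul_sqrt hB,
    hσ.trace_conjTranspose_mul_self_sqrt_mul_sqrt hB] using
    traceNorm_conjTranspose_mul_le (hB.sqrt * hρ.sqrt) (hB.sqrt * hσ.sqrt)

lemma traceNorm_sqrt_mul_mul_sqrt_eq {ρ σ : Matrix n n ℂ} (hρ : ρ.PosSemidef)
    (hσ : σ.PosSemidef) (A : Matrix n n ℂ)
    (hτ : ((σ * (Aᴴ * A)).trace⁻¹ • (A * σ * Aᴴ)).PosSemidef) :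
    traceNorm (hρ.sqrt * A * hσ.sqrt)
      = √((σ * (Aᴴ * A)).trace.re) * traceNorm (hρ.sqrt * hτ.sqrt) := by
  have hAσA : (A * σ * Aᴴ).PosSemidef := hσ.mul_mul_conjTranspose_same A
  have ht : (σ * (Aᴴ * A)).trace = (A * σ * Aᴴ).trace := by
    rw [trace_mul_cycle A σ Aᴴ, trace_mul_comm σ]
  have ht0 : 0 ≤ (σ * (Aᴴ * A)).trace := ht ▸ hAσA.trace_nonneg
  refine traceNorm_eq_sqrt_mul_of_mul_conjTranspose_eq_smul (Complex.nonneg_iff.mp ht0).1 ?_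
  rw [hσ.mul_sqrt_mul_conjTranspose, hτ.mul_sqrt_mul_conjTranspose,
    ← Complex.eq_re_of_ofReal_le ht0, ← smul_mul_assoc, ← mul_smul_comm, ht,
    hAσA.trace_smul_inv_trace_smul]
  simp only [conjTranspose_mul, mul_assoc]

end Matrix

theorem rootFidelity_decomposition_general {d : ℕ} (ρ σ A : Matrix (Fin d) (Fin d) ℂ)
    (hρ : ρ.PosSemidef)
    (hσ : σ.PosSemidef)
    (hA1 : (1 - A).PosSemidef)
    (hcond : (((σ * (Aᴴ * A)).trace)⁻¹ • (A * σ * Aᴴ)).PosSemidef) :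
    traceNorm (hρ.sqrt * hσ.sqrt) ≤
      Real.sqrt (((σ * (Aᴴ * A)).trace).re) * traceNorm (hρ.sqrt * hcond.sqrt) +
        Real.sqrt (((σ * (1 - A)).trace).re) * Real.sqrt (((ρ * (1 - A)).trace).re) := by
  have hsplit : hρ.sqrt * hσ.sqrt = hρ.sqrt * A * hσ.sqrt + hρ.sqrt * (1 - A) * hσ.sqrt := by
    rw [← add_mul, ← mul_add, add_sub_cancel, mul_one]
  rw [hsplit, ← traceNorm_sqrt_mul_mul_sqrt_eq hρ hσ A hcond]
  exact (traceNorm_add_le _ _).trans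
    (add_le_add le_rfl (traceNorm_sqrt_mul_mul_sqrt_le hρ hσ hA1))

/-- Key lemma: √F(ρ,σ) ≤ √tr(σAᴴA)·√F(ρ,σ|A) + √tr(σ(1−A))·√tr(ρ(1−A)). -/
theorem rootFidelity_decomposition {d : ℕ} (ρ σ A : Matrix (Fin d) (Fin d) ℂ)
    (hρ : ρ.PosSemidef) (hρ1 : ρ.trace = 1)
    (hσ : σ.PosSemidef) (hσ1 : σ.trace = 1)
    (hA : A.PosSemidef) (hA1 : (1 - A).PosSemidef)
    (hpos : 0 < ((σ * (Aᴴ * A)).trace).re)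
    (hcond : (((σ * (Aᴴ * A)).trace)⁻¹ • (A * σ * Aᴴ)).PosSemidef) :
    traceNorm (hρ.sqrt * hσ.sqrt) ≤
      Real.sqrt (((σ * (Aᴴ * A)).trace).re) * traceNorm (hρ.sqrt * hcond.sqrt) +
        Real.sqrt (((σ * (1 - A)).trace).re) * Real.sqrt (((ρ * (1 - A)).trace).re) :=
  rootFidelity_decomposition_general ρ σ A hρ hσ hA1 hcond
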